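/- Let (R, m) be a Noetherian local ring, I a nonzero proper ideal of R, a, b ∈ R, and M the maximal ideal of R(I)_{a,b}. Then for every n ≥ 1 one has M^n = m^n ⊕ m^{n-1}I as R-submodules of R(I)_{a,b} = R ⊕ I; consequently the M-adic topology on R(I)_{a,b} coincides with the m-adic topology of R(I)_{a,b} as an R-module, and the M-adic completion of R(I)_{a,b} is isomorphic as a ring to R̂(Î)_{a,b}, where R̂ is the m-adic completion of R and Î = I R̂. -/

import Mathlib

open IsLocalRing

universe u

/-! ### The family of rings `R(I)_{a,b}`

`RIab R I a b` is the quotient of the Rees algebra `⊕ₙ Iⁿtⁿ` by the contraction of the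
ideal generated by `t² + a t + b`.  As an `R`-module it is `R ⊕ I`; we realize it as the
type of pairs `r + i t` with `r ∈ R`, `i ∈ I`, with multiplication
`(r + i t)(s + j t) = (r s - b i j) + (r j + s i - a i j) t`. -/
@[ext]
structure RIab (R : Type u) [CommRing R] (I : Ideal R) (a b : R) : Type u where
  r : R
  i : R
  hi : i ∈ I

namespace RIab

variable {R : Type u} [CommRing R] {I : Ideal R} {a b : R}

instance : Zero (RIab R I a b) := ⟨⟨0, 0, I.zero_mem⟩⟩
instance : One (RIab R I a b) := ⟨⟨1, 0, I.zero_mem⟩⟩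
instance : Add (RIab R I a b) := ⟨fun x y => ⟨x.r + y.r, x.i + y.i, I.add_mem x.hi y.hi⟩⟩
instance : Neg (RIab R I a b) := ⟨fun x => ⟨-x.r, -x.i, I.neg_mem x.hi⟩⟩
instance : Mul (RIab R I a b) :=
  ⟨fun x y => ⟨x.r * y.r - b * (x.i * y.i),
    x.r * y.i + y.r * x.i - a * (x.i * y.i),
    I.sub_mem (I.add_mem (I.mul_mem_left _ y.hi) (I.mul_mem_left _ x.hi))
      (I.mul_mem_left _ (I.mul_mem_left _ y.hi))⟩⟩

@[simp] lemma zero_r : (0 : RIab R I a b).r = 0 := rfl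
@[simp] lemma zero_i : (0 : RIab R I a b).i = 0 := rfl
@[simp] lemma one_r : (1 : RIab R I a b).r = 1 := rfl
@[simp] lemma one_i : (1 : RIab R I a b).i = 0 := rfl
@[simp] lemma add_r (x y : RIab R I a b) : (x + y).r = x.r + y.r := rfl
@[simp] lemma add_i (x y : RIab R I a b) : (x + y).i = x.i + y.i := rfl
@[simp] lemma neg_r (x : RIab R I a b) : (-x).r = -x.r := rfl
@[simp] lemma neg_i (x : RIab R I a b) : (-x).i = -x.i := rfl
@[simp] lemma mul_r (x y : RIab R I a b) : (x * y).r = x.r * y.r - b * (x.i * y.i) := rfl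
@[simp] lemma mul_i (x y : RIab R I a b) :
    (x * y).i = x.r * y.i + y.r * x.i - a * (x.i * y.i) := rfl

instance instCommRing : CommRing (RIab R I a b) where
  add_assoc x y z := by ext <;> simp <;> ring
  zero_add x := by ext <;> simp
  add_zero x := by ext <;> simp
  add_comm x y := by ext <;> simp <;> ring
  neg_add_cancel x := by ext <;> simp
  mul_assoc x y z := by ext <;> simp <;> ring
  one_mul x := by ext <;> simp
  mul_one x := by ext <;> simp
  left_distrib x y z := by ext <;> simp <;> ring
  right_distrib x y z := by ext <;> simp <;> ring
  zero_mul x := by ext <;> simp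
  mul_zero x := by ext <;> simp
  mul_comm x y := by ext <;> simp <;> ring
  nsmul := nsmulRec
  zsmul := zsmulRec

/-- The canonical ring homomorphism `R → R(I)_{a,b}`, `r ↦ r + 0·t`. -/
def C : R →+* RIab R I a b where
  toFun r := ⟨r, 0, I.zero_mem⟩
  map_one' := rfl
  map_mul' x y := by ext <;> simp
  map_zero' := rfl
  map_add' x y := by ext <;> simp

instance instAlgebra : Algebra R (RIab R I a b) := (C (I := I) (a := a) (b := b)).toAlgebra

@[simp] lemma algebraMap_r (c : R) : (algebraMap R (RIab R I a b) c).r = c := rfl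
@[simp] lemma algebraMap_i (c : R) : (algebraMap R (RIab R I a b) c).i = 0 := rfl

instance [Nontrivial R] : Nontrivial (RIab R I a b) :=
  ⟨⟨0, 1, fun h => zero_ne_one (congrArg RIab.r h)⟩⟩

variable [IsLocalRing R]

lemma isUnit_of_isUnit_r (hI : I ≠ ⊤) {x : RIab R I a b} (hx : IsUnit x.r) : IsUnit x := by
  have hiI : x.i ∈ maximalIdeal R := le_maximalIdeal hI x.hi
  have hdet : IsUnit (x.r * x.r - a * x.r * x.i + b * (x.i * x.i)) := by
    by_contra h
    have hmem : x.r * x.r - a * x.r * x.i + b * (x.i * x.i) ∈ maximalIdeal R := by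
      rwa [IsLocalRing.mem_maximalIdeal, mem_nonunits_iff]
    have : x.r * x.r ∈ maximalIdeal R := by
      have := (maximalIdeal R).add_mem hmem
        ((maximalIdeal R).sub_mem
          ((maximalIdeal R).mul_mem_left (a * x.r) hiI)
          ((maximalIdeal R).mul_mem_left (b * x.i) hiI))
      have h2 : x.r * x.r - a * x.r * x.i + b * (x.i * x.i) +
          (a * x.r * x.i - b * x.i * x.i) = x.r * x.r := by ring
      rwa [h2] at this
    exact (IsLocalRing.mem_maximalIdeal _).mp this (hx.mul hx)
  obtain ⟨v, hv⟩ := hdet.exists_left_inv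
  refine IsUnit.of_mul_eq_one (a := x) ⟨v * (x.r - a * x.i), v * (-x.i),
    I.mul_mem_left _ (I.neg_mem x.hi)⟩ ?_
  ext
  · show x.r * (v * (x.r - a * x.i)) - b * (x.i * (v * (-x.i))) = 1
    linear_combination hv
  · show x.r * (v * (-x.i)) + v * (x.r - a * x.i) * x.i - a * (x.i * (v * (-x.i))) = 0
    ring

instance instIsLocalRing [Fact (I ≠ ⊤)] : IsLocalRing (RIab R I a b) := by
  refine IsLocalRing.of_isUnit_or_isUnit_one_sub_self fun x => ?_
  by_cases hx : IsUnit x.r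
  · exact Or.inl (isUnit_of_isUnit_r Fact.out hx)
  · refine Or.inr (isUnit_of_isUnit_r Fact.out ?_)
    have hxm : x.r ∈ maximalIdeal R := by rwa [IsLocalRing.mem_maximalIdeal, mem_nonunits_iff]
    show IsUnit (1 - x).r
    have : (1 - x).r = 1 - x.r := by
      show (1 + -x).r = 1 - x.r
      simp; ring
    rw [this]
    by_contra h
    have : (1 : R) ∈ maximalIdeal R := by
      have h1 : 1 - x.r ∈ maximalIdeal R := by
        rwa [IsLocalRing.mem_maximalIdeal, mem_nonunits_iff]
      have := (maximalIdeal R).add_mem h1 hxm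
      simpa using this
    exact (maximalIdeal.isMaximal R).ne_top ((Ideal.eq_top_iff_one _).mpr this)

lemma mem_maximalIdeal_iff [Fact (I ≠ ⊤)] (x : RIab R I a b) :
    x ∈ maximalIdeal (RIab R I a b) ↔ x.r ∈ maximalIdeal R := by
  constructor
  · intro hx
    rw [IsLocalRing.mem_maximalIdeal, mem_nonunits_iff] at hx ⊢
    intro hr
    exact hx (isUnit_of_isUnit_r Fact.out hr)
  · intro hx
    rw [IsLocalRing.mem_maximalIdeal, mem_nonunits_iff] at hx ⊢
    intro hu
    obtain ⟨y, hy⟩ := hu.exists_right_inv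
    refine hx ?_
    have h1 : x.r * y.r - b * (x.i * y.i) = 1 := congrArg RIab.r hy
    have hIm : x.i * y.i ∈ maximalIdeal R :=
      le_maximalIdeal Fact.out (I.mul_mem_right _ x.hi)
    by_contra h
    have hxm : x.r ∈ maximalIdeal R := by rwa [IsLocalRing.mem_maximalIdeal, mem_nonunits_iff]
    have : (1 : R) ∈ maximalIdeal R := by
      rw [← h1]
      exact (maximalIdeal R).sub_mem ((maximalIdeal R).mul_mem_right _ hxm)
        ((maximalIdeal R).mul_mem_left _ hIm)
    exact (maximalIdeal.isMaximal R).ne_top ((Ideal.eq_top_iff_one _).mpr this)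

lemma algebraMap_mem_nonZeroDivisors {u : R} (hu : u ∈ nonZeroDivisors R) :
    algebraMap R (RIab R I a b) u ∈ nonZeroDivisors (RIab R I a b) := by
  rw [mem_nonZeroDivisors_iff_right] at hu ⊢
  intro x hx
  have h1 : x.r * u - b * (x.i * 0) = 0 := congrArg RIab.r hx
  have h2 : x.r * 0 + u * x.i - a * (x.i * 0) = 0 := congrArg RIab.i hx
  simp only [mul_zero, sub_zero, zero_add] at h1 h2
  rw [mul_comm] at h2
  ext
  · exact hu _ h1
  · exact hu _ h2

/-- The induced homomorphism between total quotient rings `Q(R) → Q(R(I)_{a,b})`. -/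
noncomputable def mapFrac (I : Ideal R) (a b : R) :
    FractionRing R →+* FractionRing (RIab R I a b) :=
  IsLocalization.map (T := nonZeroDivisors (RIab R I a b)) _
    (algebraMap R (RIab R I a b)) (fun _ hu => algebraMap_mem_nonZeroDivisors hu)

/-- The element `t ∈ Q(R(I)_{a,b})`, realized as `(0 + i₀ t)/i₀` for a regular
element `i₀ ∈ I`. -/
noncomputable def tau (I : Ideal R) (a b : R) (i₀ : R) (h : i₀ ∈ I)
    (hreg : i₀ ∈ nonZeroDivisors R) : FractionRing (RIab R I a b) :=
  IsLocalization.mk' _ (⟨0, i₀, h⟩ : RIab R I a b)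
    (⟨algebraMap R (RIab R I a b) i₀, algebraMap_mem_nonZeroDivisors hreg⟩ :
      nonZeroDivisors (RIab R I a b))

end RIab

/-! ### Commutative-algebra notions used in the paper -/

instance (priority := 10) factMaximalIdealNeTop (R : Type u) [CommRing R] [IsLocalRing R] :
    Fact (maximalIdeal R ≠ ⊤) := ⟨(maximalIdeal.isMaximal R).ne_top⟩

instance quotientIsLocalRing (R : Type u) [CommRing R] [IsLocalRing R] (I : Ideal R)
    [hI : Fact (I ≠ ⊤)] : IsLocalRing (R ⧸ I) :=
  have : Nontrivial (R ⧸ I) := Ideal.Quotient.nontrivial_iff.mpr hI.out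
  IsLocalRing.of_surjective' (Ideal.Quotient.mk I) Ideal.Quotient.mk_surjective

section CA

variable (R : Type u) [CommRing R]

/-- The length `λ_R(M)` of an `R`-module, as the Krull dimension of its submodule lattice. -/
noncomputable def modLength (M : Type*) [AddCommGroup M] [Module R M] : ℕ∞ :=
  WithBot.unbotD 0 (Order.krullDim (Submodule R M))

/-- `λ_R(A / B)` (more precisely `λ_R(A/(A ∩ B))`) for submodules `A B` of a module. -/
noncomputable def subquotLength {M : Type*} [AddCommGroup M] [Module R M]
    (A B : Submodule R M) : ℕ∞ :=
  modLength R (↥A ⧸ (Submodule.comap A.subtype B))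

/-- The depth of a module over a local ring: the supremum of the lengths of (weakly)
regular sequences contained in the maximal ideal. -/
noncomputable def moduleDepth [IsLocalRing R] (M : Type*) [AddCommGroup M] [Module R M] : ℕ∞ :=
  sSup {n : ℕ∞ | ∃ rs : List R, (∀ x ∈ rs, x ∈ maximalIdeal R) ∧
    RingTheory.Sequence.IsWeaklyRegular M rs ∧ (rs.length : ℕ∞) = n}

/-- A local ring is Cohen-Macaulay if its depth equals its Krull dimension. -/
def IsCohenMacaulayLocalRing [IsLocalRing R] : Prop :=
  (moduleDepth R R : WithBot ℕ∞) = ringKrullDim R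

/-- A maximal Cohen-Macaulay module: finitely generated with depth equal to `dim R`. -/
def IsMaximalCohenMacaulay [IsLocalRing R] (M : Type*) [AddCommGroup M] [Module R M] : Prop :=
  Module.Finite R M ∧ (moduleDepth R M : WithBot ℕ∞) = ringKrullDim R

/-- A Cohen-Macaulay module: finitely generated with depth equal to its dimension
`dim (R / ann M)`. -/
def IsCohenMacaulayModule [IsLocalRing R] (M : Type*) [AddCommGroup M] [Module R M] : Prop :=
  Module.Finite R M ∧
    (moduleDepth R M : WithBot ℕ∞) = ringKrullDim (R ⧸ Module.annihilator R M)

/-- The Krull dimension of a ring as a natural number. -/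
noncomputable def krullDimNat : ℕ := ENat.toNat (WithBot.unbotD 0 (ringKrullDim R))

open CategoryTheory in
/-- `Ext^n_R(k, M)` where `k` is the residue field of the local ring `R`. -/
noncomputable def extResidue [IsLocalRing R] (M : Type u) [AddCommGroup M] [Module R M]
    (n : ℕ) : ModuleCat R :=
  ((Ext R (ModuleCat.{u} R) n).obj
    (Opposite.op (ModuleCat.of R (ResidueField R)))).obj (ModuleCat.of R M)

/-- The Cohen-Macaulay type `t(R) = dim_k Ext^d_R(k, R)` of a local ring of dimension `d`. -/
noncomputable def CMtype [IsLocalRing R] : ℕ∞ :=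
  modLength R (extResidue R R (krullDimNat R))

/-- A canonical module of a local ring: a finitely generated module `W` with
`dim_k Ext^i_R(k, W) = δ_{i, dim R}`. -/
def IsCanonicalModule [IsLocalRing R] (W : Type u) [AddCommGroup W] [Module R W] : Prop :=
  Module.Finite R W ∧ ∀ n : ℕ,
    modLength R (extResidue R W n) = if n = krullDimNat R then 1 else 0

/-- A Gorenstein local ring: Cohen-Macaulay of type one. -/
def IsGorensteinLocalRing [IsLocalRing R] : Prop :=
  IsCohenMacaulayLocalRing R ∧ CMtype R = 1

/-- A regular local ring: Noetherian and the maximal ideal is generated by `dim R`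
elements. -/
def IsRegularLocalRing' [IsLocalRing R] : Prop :=
  IsNoetherianRing R ∧ ∃ s : Finset R,
    Ideal.span (s : Set R) = maximalIdeal R ∧ (s.card : WithBot ℕ∞) = ringKrullDim R

/-- A complete intersection: the completion is a regular local ring modulo an ideal
generated by a regular sequence. -/
def IsCompleteIntersectionLocalRing [IsLocalRing R] : Prop :=
  ∃ (T : Type u) (_ : CommRing T) (_ : IsLocalRing T),
    IsRegularLocalRing' T ∧ ∃ rs : List T, RingTheory.Sequence.IsRegular T rs ∧
      Nonempty ((AdicCompletion (maximalIdeal R) R) ≃+* (T ⧸ Ideal.ofList rs))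

/-- The colon `(A : B) = {q ∈ Q | qB ⊆ A}` of two `R`-submodules of an `R`-algebra `Q`. -/
def qcolon {Q : Type*} [CommRing Q] [Algebra R Q] (A B : Submodule R Q) : Submodule R Q where
  carrier := {q | ∀ x ∈ B, q * x ∈ A}
  add_mem' := fun {p q} hp hq x hx => by
    rw [add_mul]; exact A.add_mem (hp x hx) (hq x hx)
  zero_mem' := fun x hx => by rw [zero_mul]; exact A.zero_mem
  smul_mem' := fun c q hq x hx => by
    rw [Algebra.smul_mul_assoc]; exact A.smul_mem c (hq x hx)

/-- The image of an ideal in the total ring of fractions, as an `R`-submodule. -/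
noncomputable def idealToFrac (J : Ideal R) : Submodule R (FractionRing R) :=
  Submodule.map (Algebra.linearMap R (FractionRing R)) J

/-- `z R` is a (minimal, i.e. principal) reduction of the fractional ideal `H`:
`z ∈ H` and `H^{n+1} = z H^n` for some `n`. -/
def IsPrincipalReduction {Q : Type*} [CommRing Q] [Algebra R Q] (z : Q)
    (H : Submodule R Q) : Prop :=
  z ∈ H ∧ ∃ n : ℕ, H ^ (n + 1) = Submodule.span R {z} * H ^ n

/-- A one-dimensional local Cohen-Macaulay ring is almost Gorenstein if it has a canonical
module which is a fractional ideal `ω` with `R ⊆ ω ⊆ (m : m)`. -/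
def IsAlmostGorensteinOneDim (S : Type u) [CommRing S] [IsLocalRing S] : Prop :=
  ∃ W : Submodule S (FractionRing S), IsFractional (nonZeroDivisors S) W ∧
    IsCanonicalModule S ↥W ∧ (1 : FractionRing S) ∈ W ∧
    W * (Submodule.map (Algebra.linearMap S (FractionRing S)) (maximalIdeal S)) ≤
      Submodule.map (Algebra.linearMap S (FractionRing S)) (maximalIdeal S)

open Filter in
/-- The Hilbert-Samuel multiplicity `e⁰_m(C)` of a module `C` over a local ring,
defined as `lim_t d! · λ(C/m^t C) / t^d` where `d = dim C`. -/
noncomputable def hsMultiplicity (S : Type u) [CommRing S] [IsLocalRing S]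
    (C : Type*) [AddCommGroup C] [Module S C] : ℝ :=
  limUnder atTop (fun t : ℕ =>
    ((Nat.factorial (krullDimNat (S ⧸ Module.annihilator S C)) *
        (modLength S (C ⧸ ((maximalIdeal S ^ t) • (⊤ : Submodule S C)))).toNat : ℕ) : ℝ) /
      (t : ℝ) ^ (krullDimNat (S ⧸ Module.annihilator S C)))

/-- The minimal number of generators `μ(C) = λ(C / m C)` of a module over a local ring. -/
noncomputable def muGen (S : Type u) [CommRing S] [IsLocalRing S]
    (C : Type*) [AddCommGroup C] [Module S C] : ℕ∞ :=
  modLength S (C ⧸ ((maximalIdeal S) • (⊤ : Submodule S C)))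

/-- A Cohen-Macaulay local ring possessing a canonical module is almost Gorenstein if there
is an exact sequence `0 → S → ω_S → C → 0` with `μ(C) = e⁰_m(C)` (Goto-Takahashi-Taniguchi). -/
def IsAlmostGorensteinLocalRing (S : Type u) [CommRing S] [IsLocalRing S] : Prop :=
  ∃ W : ModuleCat.{u} S, IsCanonicalModule S W ∧
    ∃ f : S →ₗ[S] W, Function.Injective f ∧
      ∃ m : ℕ, muGen S (W ⧸ LinearMap.range f) = m ∧
        (m : ℝ) = hsMultiplicity S (W ⧸ LinearMap.range f)

/-- The height of an ideal: the infimum of the heights of the primes containing it. -/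
noncomputable def idealHeight (J : Ideal R) : ℕ∞ :=
  ⨅ (p : PrimeSpectrum R) (_ : J ≤ p.asIdeal), Order.height p

end CA

/-! Write elements of `S = R(I)_{a,b}` as `r + i t`. The multiplication rule shows that
`M^(n+1)` consists of the `r + i t` with `r ∈ m^(n+1)` and `i ∈ m^n I`, while
`m^n S = m^n ⊕ m^n I`; so the two filtrations are cofinal. An `M`-adic Cauchy sequence
`r_n + i_n t` therefore yields an `m`-adic Cauchy sequence `(r_n)` in `R` and an `m`-adic
Cauchy sequence `(i_(n+1))` in `I`. Sending it to `lim r_n + (lim i_(n+1)) t` is a surjective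
ring homomorphism onto `R̂(Î)_{a,b}` with the same kernel as the completion map: over a
Noetherian ring the completion of `I` embeds into `R̂` with image `I R̂`. -/

namespace RIab

variable {R : Type u} [CommRing R] {I : Ideal R} {a b : R}

@[simp] lemma sub_r (x y : RIab R I a b) : (x - y).r = x.r - y.r := by
  rw [sub_eq_add_neg, add_r, neg_r, sub_eq_add_neg]

@[simp] lemma sub_i (x y : RIab R I a b) : (x - y).i = x.i - y.i := by
  rw [sub_eq_add_neg, add_i, neg_i, sub_eq_add_neg]

@[simp] lemma smul_r (c : R) (x : RIab R I a b) : (c • x).r = c * x.r := by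
  simp [Algebra.smul_def]

@[simp] lemma smul_i (c : R) (x : RIab R I a b) : (c • x).i = c * x.i := by
  simp [Algebra.smul_def]

lemma eq_smul_one_add (x : RIab R I a b) : x = x.r • (1 : RIab R I a b) + ⟨0, x.i, x.hi⟩ := by
  ext <;> simp

lemma mk_zero_mem_smul {J : Ideal R} {P : Submodule R (RIab R I a b)}
    (hP : ∀ i (hi : i ∈ I), (⟨0, i, hi⟩ : RIab R I a b) ∈ P) {j : R} (hj : j ∈ J * I) :
    (⟨0, j, Ideal.mul_le_right hj⟩ : RIab R I a b) ∈ J • P := by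
  induction hj using Submodule.mul_induction_on' with
  | mem_mul_mem c hc i hi =>
    have hci : (⟨0, c * i, I.mul_mem_left c hi⟩ : RIab R I a b) = c • ⟨0, i, hi⟩ := by
      ext <;> simp
    exact hci ▸ Submodule.smul_mem_smul hc (hP i hi)
  | add x hx y hy hx' hy' =>
    have hxy : (⟨0, x + y, Ideal.mul_le_right (add_mem hx hy)⟩ : RIab R I a b) =
        ⟨0, x, Ideal.mul_le_right hx⟩ + ⟨0, y, Ideal.mul_le_right hy⟩ := by
      ext <;> simp
    exact hxy ▸ add_mem hx' hy'

theorem mem_smul_top_iff (J : Ideal R) (x : RIab R I a b) :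
    x ∈ J • (⊤ : Submodule R (RIab R I a b)) ↔ x.r ∈ J ∧ x.i ∈ J * I := by
  refine ⟨fun hx => ?_, fun ⟨hr, hi⟩ => ?_⟩
  · refine Submodule.smul_induction_on hx (fun c hc y _ => ?_) (fun y z hy hz => ?_)
    · simpa using ⟨J.mul_mem_right y.r hc, Ideal.mul_mem_mul hc y.hi⟩
    · simpa using ⟨add_mem hy.1 hz.1, add_mem hy.2 hz.2⟩
  · rw [eq_smul_one_add x]
    exact add_mem (Submodule.smul_mem_smul hr Submodule.mem_top)
      (mk_zero_mem_smul (fun _ _ => Submodule.mem_top) hi)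

variable [IsLocalRing R] [Fact (I ≠ ⊤)]

lemma smul_pow_le_pow (n k : ℕ) :
    (maximalIdeal R) ^ n • ((maximalIdeal (RIab R I a b)) ^ k).restrictScalars R ≤
      ((maximalIdeal (RIab R I a b)) ^ (n + k)).restrictScalars R := by
  have hm : (maximalIdeal R).map (algebraMap R (RIab R I a b)) ≤ maximalIdeal _ :=
    Ideal.map_le_iff_le_comap.mpr fun c hc => (mem_maximalIdeal_iff _).mpr hc
  refine Submodule.smul_le.mpr fun c hc y hy => ?_
  rw [Algebra.smul_def, pow_add]
  refine Ideal.mul_mem_mul (Ideal.pow_right_mono hm n ?_) hy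
  rw [← Ideal.map_pow]
  exact Ideal.mem_map_of_mem _ hc

theorem mem_maximalIdeal_pow_succ_iff (n : ℕ) (x : RIab R I a b) :
    x ∈ (maximalIdeal (RIab R I a b)) ^ (n + 1) ↔
      x.r ∈ (maximalIdeal R) ^ (n + 1) ∧ x.i ∈ (maximalIdeal R) ^ n * I := by
  have hI : I ≤ maximalIdeal R := le_maximalIdeal Fact.out
  refine ⟨fun hx => ?_, fun ⟨hr, hi⟩ => ?_⟩
  · induction n generalizing x with
    | zero =>
      rw [zero_add, pow_one] at hx
      simpa using ⟨(mem_maximalIdeal_iff x).mp hx, x.hi⟩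
    | succ n ih =>
      rw [pow_succ] at hx
      refine Submodule.mul_induction_on hx (fun y hy z hz => ?_)
        (fun y z hy hz => ⟨by simpa using add_mem hy.1 hz.1, by simpa using add_mem hy.2 hz.2⟩)
      obtain ⟨hyr, hyi⟩ := ih y hy
      have hzr : z.r ∈ maximalIdeal R := (mem_maximalIdeal_iff z).mp hz
      have hyz : y.i * z.i ∈ (maximalIdeal R) ^ (n + 1) * I := by
        rw [pow_succ]
        exact Ideal.mul_mono_left (Ideal.mul_mono_right hI) (Ideal.mul_mem_mul hyi z.hi)
      have hzy : z.r * y.i ∈ (maximalIdeal R) ^ (n + 1) * I := by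
        rw [pow_succ', mul_assoc]
        exact Ideal.mul_mem_mul hzr hyi
      refine ⟨?_, ?_⟩
      · rw [mul_r, pow_succ _ (n + 1)]
        refine sub_mem (Ideal.mul_mem_mul hyr hzr) (Ideal.mul_mem_left _ b ?_)
        exact Ideal.mul_mono_right hI hyz
      · rw [mul_i]
        exact sub_mem (add_mem (Ideal.mul_mem_mul hyr z.hi) hzy) (Ideal.mul_mem_left _ a hyz)
  · rw [eq_smul_one_add x]
    refine add_mem (smul_pow_le_pow (n + 1) 0 ?_) (smul_pow_le_pow n 1 ?_)
    · exact Submodule.smul_mem_smul hr (by simp)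
    · refine mk_zero_mem_smul (fun i hi => ?_) hi
      rw [Submodule.restrictScalars_mem, pow_one, mem_maximalIdeal_iff]
      exact zero_mem _

lemma r_mem_pow {n : ℕ} {x : RIab R I a b} (hx : x ∈ (maximalIdeal (RIab R I a b)) ^ n) :
    x.r ∈ (maximalIdeal R) ^ n := by
  cases n with
  | zero => simp
  | succ n => exact ((mem_maximalIdeal_pow_succ_iff n x).mp hx).1

lemma i_mem_pow_mul {n : ℕ} {x : RIab R I a b}
    (hx : x ∈ (maximalIdeal (RIab R I a b)) ^ (n + 1)) : x.i ∈ (maximalIdeal R) ^ n * I :=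
  ((mem_maximalIdeal_pow_succ_iff n x).mp hx).2

lemma i_mul_i_mem_pow {n : ℕ} {x : RIab R I a b} (hx : x ∈ (maximalIdeal (RIab R I a b)) ^ n)
    (y : RIab R I a b) : x.i * y.i ∈ (maximalIdeal R) ^ n := by
  cases n with
  | zero => simp
  | succ n =>
    have hxi : x.i ∈ (maximalIdeal R) ^ n :=
      (Ideal.mul_le_left : (maximalIdeal R) ^ n * I ≤ _) (i_mem_pow_mul hx)
    rw [pow_succ]
    exact Ideal.mul_mem_mul hxi (le_maximalIdeal Fact.out y.hi)

lemma mem_smul_top_of_mem_pow_succ {n : ℕ} {x : RIab R I a b}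
    (hx : x ∈ (maximalIdeal (RIab R I a b)) ^ (n + 1)) :
    x ∈ (maximalIdeal R) ^ n • (⊤ : Submodule R (RIab R I a b)) := by
  obtain ⟨hr, hi⟩ := (mem_maximalIdeal_pow_succ_iff n x).mp hx
  exact (mem_smul_top_iff _ x).mpr ⟨Ideal.pow_le_pow_right n.le_succ hr, hi⟩

lemma mem_pow_of_mem_smul_top {n : ℕ} {x : RIab R I a b}
    (hx : x ∈ (maximalIdeal R) ^ n • (⊤ : Submodule R (RIab R I a b))) :
    x ∈ (maximalIdeal (RIab R I a b)) ^ n := by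
  obtain ⟨hr, hi⟩ := (mem_smul_top_iff _ x).mp hx
  cases n with
  | zero => simp
  | succ n =>
    refine (mem_maximalIdeal_pow_succ_iff n x).mpr ⟨hr, ?_⟩
    exact Ideal.mul_mono_left (Ideal.pow_le_pow_right n.le_succ) hi

end RIab

namespace AdicCompletion

section

variable {A : Type*} [CommRing A] {J : Ideal A} {M : Type*} [AddCommGroup M] [Module A M]

theorem AdicCauchySequence.sub_succ_mem (f : AdicCauchySequence J M) (n : ℕ) :
    f n - f (n + 1) ∈ (J ^ n • ⊤ : Submodule A M) :=
  SModEq.sub_mem.mp (f.property n.le_succ)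

theorem AdicCauchySequence.sub_succ_mem_pow (f : AdicCauchySequence J A) (n : ℕ) :
    f n - f (n + 1) ∈ J ^ n := by
  simpa using f.sub_succ_mem n

theorem mk_eq_zero_iff (f : AdicCauchySequence J M) :
    mk J M f = 0 ↔ ∀ n, f n ∈ (J ^ n • ⊤ : Submodule A M) := by
  simp [AdicCompletion.ext_iff, Submodule.Quotient.mk_eq_zero]

theorem mk_eq_mk_iff (f g : AdicCauchySequence J M) :
    mk J M f = mk J M g ↔ ∀ n, f n - g n ∈ (J ^ n • ⊤ : Submodule A M) := by
  rw [← sub_eq_zero, ← map_sub, mk_eq_zero_iff]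
  rfl

theorem mk_eq_mk_of_succ {f g : AdicCauchySequence J M} (h : ∀ n, g n = f (n + 1)) :
    mk J M g = mk J M f := by
  refine (mk_eq_mk_iff g f).mpr fun n => ?_
  rw [h, ← neg_sub]
  exact neg_mem (f.sub_succ_mem n)

theorem mkₐ_eq_mkₐ_iff (f g : AdicCauchySequence J A) :
    mkₐ J f = mkₐ J g ↔ ∀ n, f n - g n ∈ J ^ n := by
  change mk J A f = mk J A g ↔ _
  simp [mk_eq_mk_iff]

theorem range_map_subtype (I : Ideal A) [Module.Finite A I] :
    LinearMap.range (map J I.subtype) = I.map (algebraMap A (AdicCompletion J A)) := by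
  refine le_antisymm ?_ ?_
  · rintro _ ⟨x, rfl⟩
    obtain ⟨t, rfl⟩ := ofTensorProduct_surjective_of_finite J I x
    induction t using TensorProduct.induction_on with
    | zero =>
      rw [LinearMap.map_zero, LinearMap.map_zero]
      exact zero_mem _
    | tmul r i =>
      rw [ofTensorProduct_tmul, map_smul, map_of, smul_eq_mul, Submodule.subtype_apply]
      exact Ideal.mul_mem_left _ r (Ideal.mem_map_of_mem _ i.2)
    | add s t hs ht => simpa using add_mem hs ht
  · refine Ideal.map_le_iff_le_comap.mpr fun i hi => ⟨of J I ⟨i, hi⟩, ?_⟩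
    rw [map_of]
    rfl

end

end AdicCompletion

/-- `R̂(Î)_{a,b}`, where `R̂` is the `m`-adic completion of `R` and `Î = I R̂`. -/
abbrev RIab.completion (R : Type u) [CommRing R] [IsLocalRing R] (I : Ideal R) (a b : R) :
    Type u :=
  RIab (AdicCompletion (maximalIdeal R) R)
    (I.map (algebraMap R (AdicCompletion (maximalIdeal R) R)))
    (algebraMap R (AdicCompletion (maximalIdeal R) R) a)
    (algebraMap R (AdicCompletion (maximalIdeal R) R) b)

namespace RIab

open AdicCompletion

variable {R : Type u} [CommRing R] [IsLocalRing R] {I : Ideal R} [Fact (I ≠ ⊤)] {a b : R}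

noncomputable def rSeq (f : AdicCauchySequence (maximalIdeal (RIab R I a b)) (RIab R I a b)) :
    AdicCauchySequence (maximalIdeal R) R :=
  AdicCauchySequence.mk _ _ (fun n => (f n).r) fun n => by
    simpa [SModEq.sub_mem] using r_mem_pow (f.sub_succ_mem_pow n)

/-- The shift matches the `t`-part `m^n I` of `M^(n+1)`. -/
noncomputable def iSeq (f : AdicCauchySequence (maximalIdeal (RIab R I a b)) (RIab R I a b)) :
    AdicCauchySequence (maximalIdeal R) I :=
  AdicCauchySequence.mk _ _ (fun n => ⟨(f (n + 1)).i, (f (n + 1)).hi⟩) fun n => by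
    rw [SModEq.sub_mem, Submodule.mem_smul_top_iff]
    simpa using i_mem_pow_mul (f.sub_succ_mem_pow (n + 1))

variable [IsNoetherianRing R]

noncomputable def toCompletion
    (f : AdicCauchySequence (maximalIdeal (RIab R I a b)) (RIab R I a b)) :
    completion R I a b where
  r := AdicCompletion.mk _ _ (rSeq f)
  i := map _ I.subtype (AdicCompletion.mk _ _ (iSeq f))
  hi := range_map_subtype (J := maximalIdeal R) I ▸ LinearMap.mem_range_self _ _

lemma toCompletion_r (f : AdicCauchySequence (maximalIdeal (RIab R I a b)) (RIab R I a b)) :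
    (toCompletion f).r = mkₐ _ (rSeq f) := rfl

lemma toCompletion_i (f : AdicCauchySequence (maximalIdeal (RIab R I a b)) (RIab R I a b)) :
    (toCompletion f).i = mkₐ _ (AdicCauchySequence.map _ I.subtype (iSeq f)) := rfl

lemma toCompletion_mul (f g : AdicCauchySequence (maximalIdeal (RIab R I a b)) (RIab R I a b)) :
    toCompletion (f * g) = toCompletion f * toCompletion g := by
  have hf := f.sub_succ_mem_pow
  have hg := g.sub_succ_mem_pow
  ext : 1
  · rw [mul_r, toCompletion_r, toCompletion_r, toCompletion_r, toCompletion_i, toCompletion_i,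
      ← AlgHom.commutes (mkₐ _), ← map_mul, ← map_mul, ← map_mul, ← map_sub, mkₐ_eq_mkₐ_iff]
    intro n
    change (f n * g n).r - ((f n).r * (g n).r - b * ((f (n + 1)).i * (g (n + 1)).i)) ∈ _
    convert_to (-b * ((f n - f (n + 1)).i * (g (n + 1)).i + (g n - g (n + 1)).i * (f n).i)) ∈ _
    · rw [mul_r, sub_i, sub_i]
      ring
    exact Ideal.mul_mem_left _ _ (add_mem (i_mul_i_mem_pow (hf n) _) (i_mul_i_mem_pow (hg n) _))
  · rw [mul_i, toCompletion_r, toCompletion_r, toCompletion_i, toCompletion_i, toCompletion_i,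
      ← AlgHom.commutes (mkₐ _), ← map_mul, ← map_mul, ← map_mul, ← map_mul, ← map_add,
      ← map_sub, mkₐ_eq_mkₐ_iff]
    intro n
    change (f (n + 1) * g (n + 1)).i - ((f n).r * (g (n + 1)).i + (g n).r * (f (n + 1)).i -
      a * ((f (n + 1)).i * (g (n + 1)).i)) ∈ _
    convert_to (-((f n - f (n + 1)).r * (g (n + 1)).i + (g n - g (n + 1)).r * (f (n + 1)).i)) ∈ _
    · rw [mul_i, sub_r, sub_r]
      ring
    exact neg_mem (add_mem (Ideal.mul_mem_right _ _ (r_mem_pow (hf n)))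
      (Ideal.mul_mem_right _ _ (r_mem_pow (hg n))))

lemma toCompletion_eq_zero_iff
    (f : AdicCauchySequence (maximalIdeal (RIab R I a b)) (RIab R I a b)) :
    toCompletion f = 0 ↔ AdicCompletion.mk _ _ f = 0 := by
  have hι := map_injective (maximalIdeal R) (Submodule.injective_subtype I)
  rw [RIab.ext_iff]
  change AdicCompletion.mk _ _ (rSeq f) = 0 ∧
    map _ I.subtype (AdicCompletion.mk _ _ (iSeq f)) = 0 ↔ _
  rw [LinearMap.map_eq_zero_iff _ hι, mk_eq_zero_iff, mk_eq_zero_iff, mk_eq_zero_iff]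
  simp only [smul_eq_mul, Ideal.mul_top, rSeq, AdicCauchySequence.mk_coe, iSeq,
    Submodule.mem_smul_top_iff]
  refine ⟨fun ⟨hr, hi⟩ n => ?_,
    fun h => ⟨fun n => r_mem_pow (h n), fun n => i_mem_pow_mul (h (n + 1))⟩⟩
  cases n with
  | zero => simp
  | succ n => exact (mem_maximalIdeal_pow_succ_iff n _).mpr ⟨hr (n + 1), hi n⟩

lemma toCompletion_surjective :
    Function.Surjective (toCompletion (R := R) (I := I) (a := a) (b := b)) := by
  rintro ⟨ρ, w, hw⟩
  rw [← range_map_subtype] at hw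
  obtain ⟨ζ, rfl⟩ := hw
  obtain ⟨p, rfl⟩ := AdicCompletion.mk_surjective _ _ ρ
  obtain ⟨q, rfl⟩ := AdicCompletion.mk_surjective _ _ ζ
  let f : AdicCauchySequence (maximalIdeal (RIab R I a b)) (RIab R I a b) :=
    AdicCauchySequence.mk _ _ (fun n => ⟨p n, q n, (q n).2⟩) fun n => by
      rw [SModEq.sub_mem, smul_eq_mul, Ideal.mul_top]
      refine mem_pow_of_mem_smul_top ((mem_smul_top_iff _ _).mpr ⟨?_, ?_⟩)
      · simpa using p.sub_succ_mem n
      · simpa [Submodule.mem_smul_top_iff] using q.sub_succ_mem n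
  refine ⟨f, ?_⟩
  ext : 1
  · rfl
  · exact congrArg (map _ _) (mk_eq_mk_of_succ fun n => rfl)

noncomputable def toCompletionHom :
    AdicCauchySequence (maximalIdeal (RIab R I a b)) (RIab R I a b) →+* completion R I a b where
  toFun := toCompletion
  map_one' := by ext n <;> rfl
  map_mul' := toCompletion_mul
  map_zero' := by ext n <;> rfl
  map_add' f g := by ext n <;> rfl

noncomputable def completionEquiv :
    AdicCompletion (maximalIdeal (RIab R I a b)) (RIab R I a b) ≃+* completion R I a b :=
  have hker : RingHom.ker (mkₐ (maximalIdeal (RIab R I a b)) : _ →+* _) =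
      RingHom.ker toCompletionHom := by
    ext f
    exact (toCompletion_eq_zero_iff f).symm
  (RingHom.quotientKerEquivOfSurjective (mk_surjective _ _)).symm.trans <|
    (Ideal.quotEquivOfEq hker).trans
      (RingHom.quotientKerEquivOfSurjective toCompletion_surjective)

end RIab

theorem stmt6_general (R : Type u) [CommRing R] [IsLocalRing R] [IsNoetherianRing R]
    (I : Ideal R) [Fact (I ≠ ⊤)] (a b : R) :
    (∀ n : ℕ, 1 ≤ n → ∀ x : RIab R I a b,
      (x ∈ (maximalIdeal (RIab R I a b)) ^ n ↔
        x.r ∈ (maximalIdeal R) ^ n ∧ x.i ∈ (maximalIdeal R) ^ (n - 1) * I)) ∧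
    (∀ n : ℕ, ∃ k : ℕ, ∀ x : RIab R I a b,
      x ∈ (maximalIdeal (RIab R I a b)) ^ k →
        x ∈ (maximalIdeal R) ^ n • (⊤ : Submodule R (RIab R I a b))) ∧
    (∀ n : ℕ, ∃ k : ℕ, ∀ x : RIab R I a b,
      x ∈ (maximalIdeal R) ^ k • (⊤ : Submodule R (RIab R I a b)) →
        x ∈ (maximalIdeal (RIab R I a b)) ^ n) ∧
    Nonempty ((AdicCompletion (maximalIdeal (RIab R I a b)) (RIab R I a b)) ≃+*
      RIab (AdicCompletion (maximalIdeal R) R)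
        (I.map (algebraMap R (AdicCompletion (maximalIdeal R) R)))
        (algebraMap R (AdicCompletion (maximalIdeal R) R) a)
        (algebraMap R (AdicCompletion (maximalIdeal R) R) b)) := by
  refine ⟨fun n hn x => ?_, fun n => ⟨n + 1, fun _ => RIab.mem_smul_top_of_mem_pow_succ⟩,
    fun n => ⟨n, fun _ => RIab.mem_pow_of_mem_smul_top⟩, ⟨RIab.completionEquiv⟩⟩
  obtain ⟨k, rfl⟩ := Nat.exists_eq_add_of_le' hn
  exact RIab.mem_maximalIdeal_pow_succ_iff k x

/-- Remark 1.7.  For `(R,m)` Noetherian local, `M` the maximal ideal of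
`R(I)_{a,b}`: `Mⁿ = mⁿ ⊕ mⁿ⁻¹I` for all `n ≥ 1`; consequently the `M`-adic topology on
`R(I)_{a,b}` coincides with the `m`-adic topology of `R(I)_{a,b}` as an `R`-module, and the
`M`-adic completion of `R(I)_{a,b}` is ring-isomorphic to `R̂(Î)_{a,b}` where `Î = I R̂`. -/
theorem stmt6 (R : Type u) [CommRing R] [IsLocalRing R] [IsNoetherianRing R]
    (I : Ideal R) (hI0 : I ≠ ⊥) [Fact (I ≠ ⊤)] (a b : R) :
    (∀ n : ℕ, 1 ≤ n → ∀ x : RIab R I a b,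
      (x ∈ (maximalIdeal (RIab R I a b)) ^ n ↔
        x.r ∈ (maximalIdeal R) ^ n ∧ x.i ∈ (maximalIdeal R) ^ (n - 1) * I)) ∧
    (∀ n : ℕ, ∃ k : ℕ, ∀ x : RIab R I a b,
      x ∈ (maximalIdeal (RIab R I a b)) ^ k →
        x ∈ (maximalIdeal R) ^ n • (⊤ : Submodule R (RIab R I a b))) ∧
    (∀ n : ℕ, ∃ k : ℕ, ∀ x : RIab R I a b,
      x ∈ (maximalIdeal R) ^ k • (⊤ : Submodule R (RIab R I a b)) →
        x ∈ (maximalIdeal (RIab R I a b)) ^ n) ∧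
    Nonempty ((AdicCompletion (maximalIdeal (RIab R I a b)) (RIab R I a b)) ≃+*
      RIab (AdicCompletion (maximalIdeal R) R)
        (I.map (algebraMap R (AdicCompletion (maximalIdeal R) R)))
        (algebraMap R (AdicCompletion (maximalIdeal R) R) a)
        (algebraMap R (AdicCompletion (maximalIdeal R) R) b)) :=
  stmt6_general R I a b
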